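/- Let S ⊆ S² and let R be the union of all open sets dominating S (i.e., R = {p ∈ S² : p has an open neighborhood D such that every great circle meeting D meets S}). Then every connected component of R contains no pair of antipodal points, provided S contains no pair of orthogonal points. -/

import Mathlib

/-- The unit sphere in `ℝ³`. -/
def sphere2 : Set (EuclideanSpace ℝ (Fin 3)) := {x | ‖x‖ = 1}

/-- `D` dominates `S` if `D` is a nonempty subset of the sphere, open in the
subspace topology of the sphere, and every great circle meeting `D` meets `S`. -/
def Dominates (D S : Set (EuclideanSpace ℝ (Fin 3))) : Prop :=
  D.Nonempty ∧ D ⊆ sphere2 ∧ (∃ U, IsOpen U ∧ D = U ∩ sphere2) ∧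
    ∀ n : EuclideanSpace ℝ (Fin 3), ‖n‖ = 1 →
      (∃ x ∈ D, (inner ℝ x n : ℝ) = 0) → ∃ y ∈ S, (inner ℝ y n : ℝ) = 0


/-! If a connected subset of `R` contained `y` and `-y`, then for any `s ∈ S` the odd function
`p ↦ ⟪p, s⟫` would vanish at some point `p` of it, by the intermediate value theorem. The great
circle with pole `s` passes through `p`, which lies in a set dominating `S`, so it meets `S` in a
point orthogonal to `s`. -/

theorem exists_norm_eq_one_inner_eq_zero {E : Type*} [NormedAddCommGroup E]
    [InnerProductSpace ℝ E] [FiniteDimensional ℝ E] (hE : 1 < Module.finrank ℝ E) (y : E) :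
    ∃ n : E, ‖n‖ = 1 ∧ inner ℝ y n = 0 := by
  have hy : Module.finrank ℝ (ℝ ∙ y) ≤ 1 := by
    simpa using finrank_span_le_card (R := ℝ) ({y} : Set E)
  have : Nontrivial (ℝ ∙ y)ᗮ := by
    rw [Submodule.nontrivial_iff_ne_bot, ← Submodule.one_le_finrank_iff]
    have := (ℝ ∙ y).finrank_add_finrank_orthogonal
    omega
  obtain ⟨n, hn⟩ := exists_norm_eq (ℝ ∙ y)ᗮ zero_le_one
  exact ⟨n, hn, Submodule.inner_right_of_mem_orthogonal (Submodule.mem_span_singleton_self y) n.2⟩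

theorem IsPreconnected.exists_inner_eq_zero_of_neg_mem {E : Type*} [NormedAddCommGroup E]
    [InnerProductSpace ℝ E] {C : Set E} (hC : IsPreconnected C) {y : E} (hy : y ∈ C)
    (hny : -y ∈ C) (v : E) : ∃ p ∈ C, inner ℝ p v = 0 := by
  have hcont : ContinuousOn (fun p => inner ℝ p v) C := by fun_prop
  have hodd : inner ℝ (-y) v = -inner ℝ y v := inner_neg_left y v
  rcases le_total (inner ℝ y v) 0 with h | h
  · exact hC.intermediate_value hy hny hcont ⟨h, by linarith⟩
  · exact hC.intermediate_value hny hy hcont ⟨by linarith, h⟩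

namespace Dominates

variable {D S : Set (EuclideanSpace ℝ (Fin 3))}

theorem nonempty_right (hD : Dominates D S) : S.Nonempty := by
  obtain ⟨p, hp⟩ := hD.1
  obtain ⟨n, hn, hpn⟩ := exists_norm_eq_one_inner_eq_zero (by simp) p
  obtain ⟨s, hs, -⟩ := hD.2.2.2 n hn ⟨p, hp, hpn⟩
  exact ⟨s, hs⟩

theorem inner_ne_zero (hD : Dominates D S) (hS : S ⊆ sphere2)
    (horth : ∀ u ∈ S, ∀ v ∈ S, inner ℝ u v ≠ 0) {p s : EuclideanSpace ℝ (Fin 3)} (hp : p ∈ D)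
    (hs : s ∈ S) : inner ℝ p s ≠ 0 := fun hps => by
  obtain ⟨t, ht, hts⟩ := hD.2.2.2 s (hS hs) ⟨p, hp, hps⟩
  exact horth t ht s hs hts

end Dominates

theorem stmt_13 (S : Set (EuclideanSpace ℝ (Fin 3))) (hS : S ⊆ sphere2)
    (horth : ∀ u ∈ S, ∀ v ∈ S, (inner ℝ u v : ℝ) ≠ 0)
    (R : Set (EuclideanSpace ℝ (Fin 3)))
    (hR : R = {p | ∃ D, p ∈ D ∧ Dominates D S}) :
    ∀ x ∈ R, ∀ y ∈ connectedComponentIn R x, -y ∉ connectedComponentIn R x := by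
  subst hR
  intro x _ y hy hny
  obtain ⟨D, -, hD⟩ := connectedComponentIn_subset _ x hy
  obtain ⟨s, hs⟩ := hD.nonempty_right
  obtain ⟨p, hpC, hps⟩ :=
    isPreconnected_connectedComponentIn.exists_inner_eq_zero_of_neg_mem hy hny s
  obtain ⟨D', hpD', hD'⟩ := connectedComponentIn_subset _ x hpC
  exact hD'.inner_ne_zero hS horth hpD' hs hps
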